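/- arXiv:1010.3806 — 2 statements merged into one kernel-verified Lean document; each statement's English description precedes it below -/
import Mathlib

section
/- Every reduction of a well-typed λ▷ term occurs at a positive stage: if Γ ⊢^A M : τ and M →^T N, then ε ≤ A·T. -/
/-! ## The calculus λ▷ : syntax, substitution, and typing -/

/-- Transition variables. -/
abbrev TVar := ℕ

/-- Stages (transitions): finite sequences of transition variables. -/
abbrev Stage := List TVar

/-- Substitution of a transition `B` for the transition variable `α` in a stage. -/
def Stage.substT (A : Stage) (α : TVar) (B : Stage) : Stage :=
  A.foldr (fun β acc => (if β = α then B else [β]) ++ acc) []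

/-- Free transition variables of a stage. -/
def Stage.fmv (A : Stage) : Finset TVar := A.toFinset

/-- Types of λ▷ : base types, function types, code types ▷α τ, and ∀α.τ. -/
inductive Ty : Type
  | base : ℕ → Ty
  | arrow : Ty → Ty → Ty
  | code : TVar → Ty → Ty
  | all : TVar → Ty → Ty
  deriving DecidableEq

/-- ▷_A τ : iterated code type, identifying ▷ε τ with τ and ▷(AB) τ with ▷A(▷B τ). -/
def Ty.codeSeq (A : Stage) (τ : Ty) : Ty := A.foldr Ty.code τ

/-- Capture-avoiding substitution of a transition for a transition variable in a type. -/
def Ty.substT : Ty → TVar → Stage → Ty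
  | .base b, _, _ => .base b
  | .arrow τ σ, α, B => .arrow (τ.substT α B) (σ.substT α B)
  | .code β τ, α, B =>
      if β = α then Ty.codeSeq B (τ.substT α B) else .code β (τ.substT α B)
  | .all β τ, α, B => if β = α then .all β τ else .all β (τ.substT α B)

/-- Free transition variables of a type. -/
def Ty.fmv : Ty → Finset TVar
  | .base _ => ∅
  | .arrow τ σ => τ.fmv ∪ σ.fmv
  | .code β τ => insert β τ.fmv
  | .all β τ => τ.fmv.erase β

/-- Terms of λ▷ : variables, application, λ-abstraction, quote ▸α M, unquote ◂α M,
transition abstraction Λα.M, and transition application M A. -/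
inductive Tm : Type
  | var : ℕ → Tm
  | app : Tm → Tm → Tm
  | lam : ℕ → Ty → Tm → Tm
  | next : TVar → Tm → Tm
  | prev : TVar → Tm → Tm
  | gen : TVar → Tm → Tm
  | tapp : Tm → Stage → Tm
  deriving DecidableEq

/-- ▸_{α1…αn} M = ▸α1 … ▸αn M. -/
def Tm.nextSeq (A : Stage) (M : Tm) : Tm := A.foldr Tm.next M

/-- ◂_{α1…αn} M = ◂αn … ◂α1 M. -/
def Tm.prevSeq (A : Stage) (M : Tm) : Tm := A.foldl (fun N β => Tm.prev β N) M

/-- Substitution `M[x := N]` of the term `N` for the variable `x` in `M`. -/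
def Tm.subst : Tm → ℕ → Tm → Tm
  | .var y, x, N => if y = x then N else .var y
  | .app M₁ M₂, x, N => .app (M₁.subst x N) (M₂.subst x N)
  | .lam y τ M, x, N => if y = x then .lam y τ M else .lam y τ (M.subst x N)
  | .next β M, x, N => .next β (M.subst x N)
  | .prev β M, x, N => .prev β (M.subst x N)
  | .gen β M, x, N => .gen β (M.subst x N)
  | .tapp M A, x, N => .tapp (M.subst x N) A

/-- Substitution `M[α := B]` of the transition `B` for the transition variable `α` in `M`. -/
def Tm.substT : Tm → TVar → Stage → Tm
  | .var y, _, _ => .var y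
  | .app M₁ M₂, α, B => .app (M₁.substT α B) (M₂.substT α B)
  | .lam y τ M, α, B => .lam y (τ.substT α B) (M.substT α B)
  | .next β M, α, B =>
      if β = α then Tm.nextSeq B (M.substT α B) else .next β (M.substT α B)
  | .prev β M, α, B =>
      if β = α then Tm.prevSeq B (M.substT α B) else .prev β (M.substT α B)
  | .gen β M, α, B => if β = α then .gen β M else .gen β (M.substT α B)
  | .tapp M A, α, B => .tapp (M.substT α B) (Stage.substT A α B)

/-- Contexts: finite lists of declarations x : τ @ A. -/
abbrev Ctx := List (ℕ × Ty × Stage)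

/-- Free transition variables of a context. -/
def Ctx.fmv (Γ : Ctx) : Finset TVar :=
  Γ.foldr (fun p acc => p.2.1.fmv ∪ Stage.fmv p.2.2 ∪ acc) ∅

/-- Substitution of a transition for a transition variable in a context. -/
def Ctx.substT (Γ : Ctx) (α : TVar) (B : Stage) : Ctx :=
  Γ.map (fun p => (p.1, p.2.1.substT α B, Stage.substT p.2.2 α B))

/-- The typing judgment Γ ⊢^A M : τ of λ▷. -/
inductive Typing : Ctx → Stage → Tm → Ty → Prop
  | var {Γ : Ctx} {A x τ} :
      (x, τ, A) ∈ Γ → Typing Γ A (.var x) τ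
  | abs {Γ : Ctx} {A : Stage} {x τ σ M} :
      Typing ((x, τ, A) :: Γ) A M σ → Typing Γ A (.lam x τ M) (.arrow τ σ)
  | app {Γ A M N τ σ} :
      Typing Γ A M (.arrow τ σ) → Typing Γ A N τ → Typing Γ A (.app M N) σ
  | next {Γ A α M τ} :
      Typing Γ (A ++ [α]) M τ → Typing Γ A (.next α M) (.code α τ)
  | prev {Γ A α M τ} :
      Typing Γ A M (.code α τ) → Typing Γ (A ++ [α]) (.prev α M) τ
  | gen {Γ A α M τ} :
      Typing Γ A M τ → α ∉ Ctx.fmv Γ ∪ Stage.fmv A →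
      Typing Γ A (.gen α M) (.all α τ)
  | ins {Γ A α M τ B} :
      Typing Γ A M (.all α τ) → Typing Γ A (.tapp M B) (τ.substT α B)

/-- Paths: elements of the free group generated by the transition variables. -/
abbrev TPath := FreeGroup TVar

/-- The positive path corresponding to a transition. -/
def Stage.toPath (A : Stage) : TPath := (A.map FreeGroup.of).prod

/-- A path is positive iff it is (the image of) a transition. -/
def TPath.pos (T : TPath) : Prop := ∃ A : Stage, T = Stage.toPath A

/-- T ≤ U iff T·A = U for some positive path A. -/
def TPath.le (T U : TPath) : Prop := ∃ A : Stage, T * Stage.toPath A = U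

/-- T[α := ε] : erase the generator α from a path. -/
def TPath.erase (α : TVar) (T : TPath) : TPath :=
  (FreeGroup.lift fun β => if β = α then (1 : TPath) else FreeGroup.of β) T

/-- Annotated reduction M →^T N: reduction annotated with the path from
the stage of M to the stage of the constructor destructed by the reduction. -/
inductive ARed : Tm → TPath → Tm → Prop
  | beta {x τ M N} : ARed (.app (.lam x τ M) N) 1 (M.subst x N)
  | tbeta {α M A} : ARed (.tapp (.gen α M) A) 1 (M.substT α A)
  | pn {α M} : ARed (.prev α (.next α M)) (FreeGroup.of α)⁻¹ M
  | lam {x τ M T N} : ARed M T N → ARed (.lam x τ M) T (.lam x τ N)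
  | appL {M T N P} : ARed M T N → ARed (.app M P) T (.app N P)
  | appR {M T N P} : ARed M T N → ARed (.app P M) T (.app P N)
  | next {α M T N} :
      ARed M T N → ARed (.next α M) (FreeGroup.of α * T) (.next α N)
  | prev {α M T N} :
      ARed M T N → ARed (.prev α M) ((FreeGroup.of α)⁻¹ * T) (.prev α N)
  | tapp {M T N A} : ARed M T N → ARed (.tapp M A) T (.tapp N A)
  | gen {α M T N} : ARed M T N → ARed (.gen α M) (TPath.erase α T) (.gen α N)

@[simp]
lemma Stage.toPath_nil : Stage.toPath [] = 1 := rfl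

@[simp]
lemma Stage.toPath_cons (β : TVar) (A : Stage) :
    Stage.toPath (β :: A) = FreeGroup.of β * Stage.toPath A := rfl

@[simp]
lemma Stage.toPath_append (A B : Stage) :
    Stage.toPath (A ++ B) = Stage.toPath A * Stage.toPath B := by
  simp [Stage.toPath]

@[simp]
lemma TPath.erase_of (α β : TVar) :
    TPath.erase α (FreeGroup.of β) = if β = α then 1 else FreeGroup.of β :=
  FreeGroup.lift_apply_of

lemma TPath.erase_mul (α : TVar) (T U : TPath) :
    TPath.erase α (T * U) = TPath.erase α T * TPath.erase α U :=
  map_mul _ _ _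

lemma TPath.erase_toPath (α : TVar) (B : Stage) :
    TPath.erase α (Stage.toPath B) = Stage.toPath (B.filter (· ≠ α)) := by
  induction B with
  | nil => rfl
  | cons β B ih =>
    by_cases hβ : β = α <;> simp [TPath.erase_mul, ih, hβ]

lemma TPath.erase_toPath_of_not_mem {α : TVar} {A : Stage} (h : α ∉ A) :
    TPath.erase α (Stage.toPath A) = Stage.toPath A := by
  rw [TPath.erase_toPath, List.filter_eq_self.2]
  rintro β hβ
  simpa using fun he : β = α => h (he ▸ hβ)

lemma TPath.pos_toPath (A : Stage) : (Stage.toPath A).pos := ⟨A, rfl⟩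

lemma TPath.pos.erase {T : TPath} (hT : T.pos) (α : TVar) : (TPath.erase α T).pos := by
  obtain ⟨B, rfl⟩ := hT
  exact ⟨_, TPath.erase_toPath α B⟩

lemma TPath.one_le_iff_pos {T : TPath} : TPath.le 1 T ↔ T.pos := by
  simp only [TPath.le, TPath.pos, one_mul, eq_comm]

/- By induction on the reduction, inverting the typing derivation at each step. The redex
`◂α(▸α M)` at stage `Aα` contributes `Aα·α⁻¹ = A`. Under `Λα` the path is erased at `α`;
since `α` does not occur in `A`, this erasure fixes `A`, and it maps positive paths to
positive paths. -/
theorem ARed.pos_toPath_mul {M N : Tm} {T : TPath} (hr : ARed M T N) {Γ : Ctx} {A : Stage}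
    {τ : Ty} (ht : Typing Γ A M τ) : (Stage.toPath A * T).pos := by
  induction hr generalizing Γ A τ with
  | beta | tbeta => simpa using TPath.pos_toPath A
  | pn =>
    cases ht with
    | @prev _ A _ _ _ _ => simpa using TPath.pos_toPath A
  | lam _ ih => cases ht with | abs h => exact ih h
  | appL _ ih => cases ht with | app h _ => exact ih h
  | appR _ ih => cases ht with | app _ h => exact ih h
  | tapp _ ih => cases ht with | ins h => exact ih h
  | next _ ih =>
    cases ht with
    | next h => simpa [mul_assoc] using ih h
  | prev _ ih =>
    cases ht with
    | prev h => simpa [mul_assoc] using ih h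
  | @gen α _ T _ _ ih =>
    cases ht with
    | gen h hα =>
      have hαA : α ∉ A := fun hm => hα (Finset.mem_union_right _ (List.mem_toFinset.2 hm))
      simpa [TPath.erase_mul, TPath.erase_toPath_of_not_mem hαA] using (ih h).erase α

/-- Every reduction of a well-typed term occurs at a positive stage:
if Γ ⊢^A M : τ and M →^T N, then ε ≤ A·T. -/
theorem reduction_positive_stage {Γ : Ctx} {A : Stage} {M N : Tm} {τ : Ty} {T : TPath}
    (ht : Typing Γ A M τ) (hr : ARed M T N) :
    TPath.le 1 (Stage.toPath A * T) :=
  TPath.one_le_iff_pos.2 (hr.pos_toPath_mul ht)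
end

section
/- The embedding of λ○ into λ▷ preserves typing: if Γ ⊢^n M : τ in λ○, then ⟦Γ⟧ ⊢^{αⁿ} ⟦M⟧ : ⟦τ⟧ in λ▷, where αⁿ is the stage consisting of n copies of the fixed transition variable α. -/
/-! ## Davies' λ○ and its embedding into λ▷ -/

/-- Types of λ○. -/
inductive CTy : Type
  | base : ℕ → CTy
  | arrow : CTy → CTy → CTy
  | circ : CTy → CTy
  deriving DecidableEq

/-- Terms of λ○. -/
inductive CTm : Type
  | var : ℕ → CTm
  | lam : ℕ → CTy → CTm → CTm
  | app : CTm → CTm → CTm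
  | next : CTm → CTm
  | prev : CTm → CTm
  deriving DecidableEq

/-- Contexts of λ○ : declarations x : τ @ n with natural-number stages. -/
abbrev CCtx := List (ℕ × CTy × ℕ)

/-- The typing judgment Γ ⊢^n M : τ of λ○. -/
inductive CTyping : CCtx → ℕ → CTm → CTy → Prop
  | var {Γ : CCtx} {n x τ} : (x, τ, n) ∈ Γ → CTyping Γ n (.var x) τ
  | abs {Γ : CCtx} {n x τ σ M} :
      CTyping ((x, τ, n) :: Γ) n M σ → CTyping Γ n (.lam x τ M) (.arrow τ σ)
  | app {Γ n M N τ σ} :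
      CTyping Γ n M (.arrow τ σ) → CTyping Γ n N τ → CTyping Γ n (.app M N) σ
  | next {Γ n M τ} : CTyping Γ (n + 1) M τ → CTyping Γ n (.next M) (.circ τ)
  | prev {Γ n M τ} : CTyping Γ n M (.circ τ) → CTyping Γ (n + 1) (.prev M) τ

/-- The embedding of λ○ types into λ▷ types, for a fixed transition variable α. -/
def embTy (α : TVar) : CTy → Ty
  | .base b => .base b
  | .arrow τ σ => .arrow (embTy α τ) (embTy α σ)
  | .circ τ => .code α (embTy α τ)

/-- The embedding of λ○ terms into λ▷ terms, for a fixed transition variable α. -/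
def embTm (α : TVar) : CTm → Tm
  | .var x => .var x
  | .lam x τ M => .lam x (embTy α τ) (embTm α M)
  | .app M N => .app (embTm α M) (embTm α N)
  | .next M => .next α (embTm α M)
  | .prev M => .prev α (embTm α M)

/-- The embedding of λ○ contexts into λ▷ contexts. -/
def embCtx (α : TVar) (Γ : CCtx) : Ctx :=
  Γ.map (fun p => (p.1, embTy α p.2.1, List.replicate p.2.2 α))

theorem mem_embCtx {Γ : CCtx} {x : ℕ} {τ : CTy} {n : ℕ} (α : TVar) (h : (x, τ, n) ∈ Γ) :
    (x, embTy α τ, List.replicate n α) ∈ embCtx α Γ :=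
  List.mem_map_of_mem h

/-- The embedding of λ○ into λ▷ preserves typing:
if Γ ⊢^n M : τ in λ○, then ⟦Γ⟧ ⊢^{αⁿ} ⟦M⟧ : ⟦τ⟧ in λ▷. -/
theorem embedding_preserves_typing (α : TVar) {Γ : CCtx} {n : ℕ} {M : CTm} {τ : CTy}
    (h : CTyping Γ n M τ) :
    Typing (embCtx α Γ) (List.replicate n α) (embTm α M) (embTy α τ) := by
  -- λ▷ grows stages on the right, so the λ○ stage n + 1 is read as αⁿ ++ [α].
  induction h with
  | var hmem => exact .var (mem_embCtx α hmem)
  | abs _ ih => exact .abs ih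
  | app _ _ ih₁ ih₂ => exact .app ih₁ ih₂
  | next _ ih => exact .next (List.replicate_succ' ▸ ih)
  | prev _ ih =>
    rw [List.replicate_succ']
    exact .prev ih
end
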